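/- arXiv:1701.03896 — 2 statements merged into one kernel-verified Lean document; each statement's English description precedes it below -/
import Mathlib

section
/- For σ, π ∈ S_n and r dividing n, the r-regular Ulam distance d_r(σ,π) equals the minimum number k of translocations φ_1,...,φ_k such that m_σ^r · φ_1 ⋯ φ_k = m_π^r. -/
namespace UlamPaper

/-- Underlying function of the translocation `φ(i,j)` (0-indexed). -/
def tf (i j k : ℕ) : ℕ :=
  if i ≤ j then (if k < i ∨ j < k then k else if k = j then i else k + 1)
  else (if k < j ∨ i < k then k else if k = j then i else k - 1)

theorem tf_lt {n i j k : ℕ} (hi : i < n) (hj : j < n) (hk : k < n) : tf i j k < n := by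
  unfold tf; split_ifs <;> omega

theorem tf_tf (i j k : ℕ) : tf j i (tf i j k) = k := by
  unfold tf; split_ifs <;> omega

/-- The translocation `φ(i,j)` as a permutation of `Fin n`: it deletes the entry in
position `i` and reinserts it at position `j`, shifting intermediate entries. -/
def transloc {n : ℕ} (i j : Fin n) : Equiv.Perm (Fin n) where
  toFun k := ⟨tf i.val j.val k.val, tf_lt i.isLt j.isLt k.isLt⟩
  invFun k := ⟨tf j.val i.val k.val, tf_lt j.isLt i.isLt k.isLt⟩
  left_inv k := Fin.ext (tf_tf i.val j.val k.val)
  right_inv k := Fin.ext (tf_tf j.val i.val k.val)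

/-- `IsTransloc φ` : `φ` is a translocation. -/
def IsTransloc {n : ℕ} (φ : Equiv.Perm (Fin n)) : Prop := ∃ i j : Fin n, φ = transloc i j

/-- Length of the longest common subsequence of two `n`-length sequences. -/
noncomputable def lcsLen {n : ℕ} {α : Type*} (u v : Fin n → α) : ℕ :=
  sSup {k | ∃ f g : Fin k → Fin n, StrictMono f ∧ StrictMono g ∧ ∀ p, u (f p) = v (g p)}

/-- The Ulam distance `d(σ,π) = n - ℓ(σ,π)`. -/
noncomputable def ulamDist {n : ℕ} (σ π : Equiv.Perm (Fin n)) : ℕ :=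
  n - lcsLen (⇑σ) (⇑π)

/-- The `r`-regular multipermutation `m_σ^r` (with values in `[1, n/r]`). -/
def mult {n : ℕ} (r : ℕ) (σ : Equiv.Perm (Fin n)) : Fin n → ℕ :=
  fun i => (σ i).val / r + 1

/-- The `r`-regular Ulam distance, expressed as `n - ℓ(m_σ^r, m_π^r)`. -/
noncomputable def multDist {n : ℕ} (r : ℕ) (σ π : Equiv.Perm (Fin n)) : ℕ :=
  n - lcsLen (mult r σ) (mult r π)

/-!
A translocation changes a sequence `w` only by moving one entry, so `w` and `w ∘ φ` share a
common subsequence of length `n - 1`. Since `ℓ(u,w) + ℓ(w,v) ≤ n + ℓ(u,v)` (two common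
subsequences through `w` overlap in at least `ℓ(u,w) + ℓ(w,v) - n` positions of `w`), each
translocation raises `ℓ(·, v)` by at most one, so at least `n - ℓ(u,v)` translocations are
needed. Conversely, if `u` and `v` are rearrangements of each other (as `m_σ^r` and `m_π^r`
are) and a longest common subsequence misses position `j` of `v`, then counting values shows
that some position `i` of `u` outside the subsequence carries the value `v j`; translocating `i`
to the slot matching `j` lengthens the common subsequence by one.
-/

open Function Finset

section LCS

variable {n : ℕ} {α : Type*}

lemma bddAbove_lcsSet (u v : Fin n → α) :
    BddAbove
      {k | ∃ f g : Fin k → Fin n, StrictMono f ∧ StrictMono g ∧ ∀ p, u (f p) = v (g p)} :=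
  ⟨n, fun _ ⟨f, _, hf, _⟩ => by simpa using Fintype.card_le_of_injective f hf.injective⟩

lemma le_lcsLen {u v : Fin n → α} {k : ℕ} {f g : Fin k → Fin n} (hf : StrictMono f)
    (hg : StrictMono g) (hfg : ∀ p, u (f p) = v (g p)) : k ≤ lcsLen u v :=
  le_csSup (bddAbove_lcsSet u v) ⟨f, g, hf, hg, hfg⟩

lemma exists_lcs (u v : Fin n → α) :
    ∃ f g : Fin (lcsLen u v) → Fin n,
      StrictMono f ∧ StrictMono g ∧ ∀ p, u (f p) = v (g p) :=
  Nat.sSup_mem ⟨0, Set.mem_ofPred.2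
    ⟨Fin.elim0, Fin.elim0, fun a => a.elim0, fun a => a.elim0, fun p => p.elim0⟩⟩
    (bddAbove_lcsSet u v)

lemma lcsLen_le (u v : Fin n → α) : lcsLen u v ≤ n := by
  obtain ⟨f, -, hf, -⟩ := exists_lcs u v
  simpa using Fintype.card_le_of_injective f hf.injective

lemma lcsLen_self (u : Fin n → α) : lcsLen u u = n :=
  (lcsLen_le u u).antisymm <| by
    simpa using le_lcsLen (u := u) strictMono_id strictMono_id fun _ => rfl

lemma eq_of_lcsLen_eq {u v : Fin n → α} (h : lcsLen u v = n) : u = v := by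
  obtain ⟨f, g, hf, hg, hfg⟩ := h ▸ exists_lcs u v
  funext k
  simpa only [hf.apply_eq, hg.apply_eq] using hfg k

lemma exists_strictMono_comp_eq {β γ δ : Type*} [LinearOrder β] [Preorder γ] [Preorder δ]
    {g : β → γ} {e : δ → γ} (hg : StrictMono g) (he : StrictMono e)
    (hrange : Set.range e ⊆ Set.range g) : ∃ a : δ → β, StrictMono a ∧ g ∘ a = e := by
  choose a ha using fun x => hrange ⟨x, rfl⟩
  exact ⟨a, fun x y hxy => hg.lt_iff_lt.mp (by simpa only [ha] using he hxy), funext ha⟩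

lemma lcsLen_add_lcsLen_le (u w v : Fin n → α) : lcsLen u w + lcsLen w v ≤ n + lcsLen u v := by
  classical
  obtain ⟨f₁, g₁, hf₁, hg₁, h₁⟩ := exists_lcs u w
  obtain ⟨f₂, g₂, hf₂, hg₂, h₂⟩ := exists_lcs w v
  have hcard : lcsLen u w + lcsLen w v ≤ n + #(univ.image g₁ ∩ univ.image f₂) := by
    have hunion := card_union_add_card_inter (univ.image g₁) (univ.image f₂)
    have huniv := card_le_univ (univ.image g₁ ∪ univ.image f₂)
    rw [card_image_of_injective _ hg₁.injective, card_image_of_injective _ hf₂.injective,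
      card_univ, Fintype.card_fin, card_fin] at hunion
    rw [Fintype.card_fin] at huniv
    omega
  set S := univ.image g₁ ∩ univ.image f₂
  have hS : Set.range (S.orderEmbOfFin rfl) ⊆ Set.range g₁ ∩ Set.range f₂ := by
    simp [S, coe_image]
  obtain ⟨a, ha, hga⟩ := exists_strictMono_comp_eq hg₁ (S.orderEmbOfFin rfl).strictMono
    (hS.trans Set.inter_subset_left)
  obtain ⟨b, hb, hfb⟩ := exists_strictMono_comp_eq hf₂ (S.orderEmbOfFin rfl).strictMono
    (hS.trans Set.inter_subset_right)
  have := le_lcsLen (u := u) (v := v) (hf₁.comp ha) (hg₂.comp hb) fun p => by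
    have hp := congrFun (hga.trans hfb.symm) p
    simp only [comp_apply] at hp ⊢
    rw [h₁, hp, h₂]
  omega

end LCS

section Transloc

lemma transloc_apply_self {n : ℕ} (i t : Fin n) : transloc i t t = i :=
  Fin.ext (by simp only [transloc, Equiv.coe_fn_mk, tf]; split_ifs <;> omega)

lemma transloc_succAbove {m : ℕ} (i t : Fin (m + 1)) (q : Fin m) :
    transloc i t (t.succAbove q) = i.succAbove q := by
  ext
  simp only [transloc, Equiv.coe_fn_mk, tf, Fin.succAbove, Fin.lt_def]
  split_ifs <;> simp_all <;> omega

variable {n : ℕ} {α : Type*}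

lemma lcsLen_comp_transloc (w : Fin n → α) (i t : Fin n) :
    n ≤ lcsLen w (w ∘ transloc i t) + 1 := by
  cases n with
  | zero => exact i.elim0
  | succ m =>
    have := le_lcsLen (u := w) (v := w ∘ transloc i t) (Fin.strictMono_succAbove i)
      (Fin.strictMono_succAbove t) fun q => by simp only [comp_apply, transloc_succAbove]
    omega

lemma lcsLen_comp_transloc_le (u v : Fin n → α) (i t : Fin n) :
    lcsLen (u ∘ transloc i t) v ≤ lcsLen u v + 1 := by
  have := lcsLen_add_lcsLen_le u (u ∘ transloc i t) v
  have := lcsLen_comp_transloc u i t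
  omega

lemma sub_lcsLen_le_length {u v : Fin n → α} {L : List (Equiv.Perm (Fin n))}
    (hL : ∀ φ ∈ L, IsTransloc φ) (huv : u ∘ L.prod = v) : n - lcsLen u v ≤ L.length := by
  induction L generalizing u with
  | nil => simp [← huv, lcsLen_self]
  | cons φ L ih =>
    obtain ⟨i, t, rfl⟩ := hL φ List.mem_cons_self
    have := ih (u := u ∘ transloc i t) (fun ψ hψ => hL ψ (List.mem_cons_of_mem _ hψ))
      (by rwa [List.prod_cons, Equiv.Perm.coe_mul, ← comp_assoc] at huv)
    have := lcsLen_comp_transloc_le u v i t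
    simp only [List.length_cons]
    omega

end Transloc

section Insertion

variable {ℓ : ℕ}

lemma exists_strictMono_insertNth {α : Type*} [LinearOrder α] {a : Fin ℓ → α}
    (ha : StrictMono a) {x : α} (hx : x ∉ Set.range a) :
    ∃ p : Fin (ℓ + 1), StrictMono (Fin.insertNth p x a) := by
  have hP : ∃ k, ∀ q : Fin ℓ, k ≤ q.val → x < a q :=
    ⟨ℓ, fun q hq => absurd q.isLt (by omega)⟩
  have hle : Nat.find hP ≤ ℓ := Nat.find_min' hP fun q hq => absurd q.isLt (by omega)
  refine ⟨⟨Nat.find hP, by omega⟩, (Fin.strictMono_insertNth_iff _ _ _).2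
    ⟨ha, fun q hq => ?_, fun q hq => Nat.find_spec hP q hq⟩⟩
  obtain ⟨q', hqq', hq'⟩ : ∃ q' : Fin ℓ, q.val ≤ q'.val ∧ a q' ≤ x := by
    simpa using Nat.find_min hP (show q.val < Nat.find hP from hq)
  exact (ha.monotone hqq').trans_lt (hq'.lt_of_ne fun h => hx ⟨q', h⟩)

lemma exists_strictMono_insertNth_succAbove {m : ℕ} {b : Fin ℓ → Fin m} (hb : StrictMono b)
    (p : Fin (ℓ + 1)) :
    ∃ t : Fin (m + 1), StrictMono (Fin.insertNth p t (t.succAbove ∘ b)) := by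
  suffices ∃ t : Fin (m + 1), (∀ q, q.castSucc < p → (b q).castSucc < t) ∧
      ∀ q, p ≤ q.castSucc → t ≤ (b q).castSucc by
    obtain ⟨t, hlt, hgt⟩ := this
    refine ⟨t, (Fin.strictMono_insertNth_iff _ _ _).2 ⟨(Fin.strictMono_succAbove t).comp hb,
      fun q hq => ?_, fun q hq => ?_⟩⟩
    · exact (Fin.succAbove_lt_iff_castSucc_lt _ _).2 (hlt q hq)
    · exact (Fin.lt_succAbove_iff_le_castSucc _ _).2 (hgt q hq)
  cases p using Fin.cases with
  | zero => exact ⟨0, fun q hq => absurd hq (Fin.not_lt_zero _), fun _ _ => Fin.zero_le _⟩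
  | succ p =>
    exact ⟨(b p).succ,
      fun q hq => Fin.castSucc_lt_succ_iff.2 (hb.monotone (Fin.castSucc_lt_succ_iff.1 hq)),
      fun q hq => Fin.succ_le_castSucc_iff.2 (hb (Fin.succ_le_castSucc_iff.1 hq))⟩

end Insertion

section Rearrangement

variable {n : ℕ} {α : Type*}

lemma map_univ_val_eq_add {β : Type*} [Fintype β] [DecidableEq β] (w : β → α)
    (S : Finset β) :
    univ.val.map w = S.val.map w + Sᶜ.val.map w := by
  rw [← Multiset.map_add, ← Multiset.filter_add_not (· ∈ S) univ.val, ← filter_val,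
    ← filter_val]
  simp [compl_eq_univ_sdiff, sdiff_eq_filter]

lemma map_univ_val_comp_perm {β : Type*} [Fintype β] (w : β → α) (σ : Equiv.Perm β) :
    univ.val.map (w ∘ σ) = univ.val.map w := by
  rw [← Multiset.map_map, Multiset.map_univ_val_equiv]

lemma exists_notMem_range_eq {u v : Fin n → α} (huv : univ.val.map u = univ.val.map v)
    {ℓ : ℕ} {f g : Fin ℓ → Fin n} (hf : Injective f) (hg : Injective g)
    (hfg : ∀ p, u (f p) = v (g p)) {j : Fin n} (hj : j ∉ Set.range g) :
    ∃ i ∉ Set.range f, u i = v j := by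
  have hsplit (w : Fin n → α) {e : Fin ℓ → Fin n} (he : Injective e) :
      univ.val.map w = univ.val.map (w ∘ e) + (univ.map ⟨e, he⟩)ᶜ.val.map w := by
    rw [map_univ_val_eq_add w (univ.map ⟨e, he⟩), map_val, Multiset.map_map]
    rfl
  have hcompl : (univ.map ⟨f, hf⟩)ᶜ.val.map u = (univ.map ⟨g, hg⟩)ᶜ.val.map v := by
    have := hsplit u hf
    rw [huv, hsplit v hg, show u ∘ f = v ∘ g from funext hfg] at this
    exact (add_left_cancel this).symm
  obtain ⟨i, hi, hij⟩ := Multiset.mem_map.1 <| hcompl ▸ Multiset.mem_map_of_mem v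
    (s := (univ.map ⟨g, hg⟩)ᶜ.val) (by simpa using hj)
  exact ⟨i, by simpa using hi, hij⟩

lemma exists_transloc_lcsLen_lt {u v : Fin n → α} (huv : univ.val.map u = univ.val.map v)
    (hlt : lcsLen u v < n) : ∃ i t : Fin n, lcsLen u v < lcsLen (u ∘ transloc i t) v := by
  obtain ⟨m, rfl⟩ : ∃ m, n = m + 1 := Nat.exists_eq_add_one_of_ne_zero (by omega)
  obtain ⟨f, g, hf, hg, hfg⟩ := exists_lcs u v
  obtain ⟨j, hj⟩ : ∃ j, j ∉ Set.range g := by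
    by_contra! h
    have := Fintype.card_le_of_surjective g h
    simp only [Fintype.card_fin] at this
    omega
  obtain ⟨i, hi, hij⟩ := exists_notMem_range_eq huv hf.injective hg.injective hfg hj
  obtain ⟨f', hf', rfl⟩ := exists_strictMono_comp_eq (Fin.strictMono_succAbove i) hf
    (by simpa [Set.subset_compl_singleton_iff] using hi)
  obtain ⟨p, hG⟩ := exists_strictMono_insertNth hg hj
  obtain ⟨t, hF⟩ := exists_strictMono_insertNth_succAbove hf' p
  refine ⟨i, t, Nat.lt_of_succ_le <|
    le_lcsLen hF hG ((Fin.forall_iff_succAbove p).2 ⟨?_, fun q => ?_⟩)⟩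
  · simpa [transloc_apply_self] using hij
  · simpa [transloc_succAbove] using hfg q

lemma exists_transloc_list {u v : Fin n → α} (huv : univ.val.map u = univ.val.map v) :
    ∃ L : List (Equiv.Perm (Fin n)), (∀ φ ∈ L, IsTransloc φ) ∧ u ∘ L.prod = v ∧
      L.length = n - lcsLen u v := by
  induction h : n - lcsLen u v generalizing u with
  | zero =>
    refine ⟨[], by simp, ?_, rfl⟩
    simpa using eq_of_lcsLen_eq ((lcsLen_le u v).antisymm (by omega))
  | succ d ih =>
    obtain ⟨i, t, hit⟩ := exists_transloc_lcsLen_lt huv (by omega)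
    obtain ⟨L, hL, hLuv, hlen⟩ := ih (u := u ∘ transloc i t)
      ((map_univ_val_comp_perm u _).trans huv)
      (by have := lcsLen_comp_transloc_le u v i t; omega)
    refine ⟨transloc i t :: L, ?_, ?_, by simp [hlen]⟩
    · exact List.forall_mem_cons.2 ⟨⟨i, t, rfl⟩, hL⟩
    · rwa [List.prod_cons, Equiv.Perm.coe_mul, ← comp_assoc]

theorem sub_lcsLen_eq_sInf {u v : Fin n → α} (huv : univ.val.map u = univ.val.map v) :
    n - lcsLen u v = sInf {k | ∃ L : List (Equiv.Perm (Fin n)),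
      L.length = k ∧ (∀ φ ∈ L, IsTransloc φ) ∧ u ∘ ⇑L.prod = v} := by
  refine (IsLeast.csInf_eq ⟨?_, ?_⟩).symm
  · obtain ⟨L, hL, huv', hlen⟩ := exists_transloc_list huv
    exact ⟨L, hlen, hL, huv'⟩
  · rintro k ⟨L, rfl, hL, huv'⟩
    exact sub_lcsLen_le_length hL huv'

end Rearrangement

theorem multDist_eq_min_translocations_general {n r : ℕ} (σ π : Equiv.Perm (Fin n)) :
    multDist r σ π =
      sInf {k | ∃ L : List (Equiv.Perm (Fin n)),
        L.length = k ∧ (∀ φ ∈ L, IsTransloc φ) ∧ mult r σ ∘ ⇑L.prod = mult r π} :=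
  sub_lcsLen_eq_sInf <| (map_univ_val_comp_perm (fun k : Fin n => k.val / r + 1) σ).trans
    (map_univ_val_comp_perm _ π).symm

/-- The `r`-regular Ulam distance equals the minimum number `k` of translocations
`φ_1, …, φ_k` with `m_σ^r · φ_1 ⋯ φ_k = m_π^r`. -/
theorem multDist_eq_min_translocations {n r : ℕ} (hr : 0 < r) (hdvd : r ∣ n)
    (σ π : Equiv.Perm (Fin n)) :
    multDist r σ π =
      sInf {k | ∃ L : List (Equiv.Perm (Fin n)),
        L.length = k ∧ (∀ φ ∈ L, IsTransloc φ) ∧ mult r σ ∘ ⇑L.prod = mult r π} :=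
  multDist_eq_min_translocations_general σ π

end UlamPaper
end

section
/- For all σ ∈ S_n and r dividing n, |S(m_e^r, 1)| ≤ |S(m_σ^r, 1)|; that is, the identity multipermutation minimizes the r-regular Ulam sphere of radius 1. -/
/-!
For `n + 1` positions the sphere of radius one around a word `w` is the set of words
`w ∘ transloc i j`. Call a pair `(p, c)` of a position and a letter `c ≠ w p` good if `c` occurs
before `p`, or occurs after `p` but not only as a run starting at `p + 1`. Moving to `p` the last
copy of `c` before `p` (or, if there is none, the last copy of `c`) produces pairwise distinct
words different from `w`, so the sphere has at least `1 + #good` elements. With `L` distinct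
letters there are `(n + 1) (L - 1)` such pairs, and the bad ones among them have pairwise distinct
letters, none equal to `w 0`, so `#good ≥ n (L - 1)`. For a sorted word every translocation is `w` itself or one of these canonical
moves, and every letter other than `w 0` has a bad pair, so its sphere has at most
`1 + n (L - 1)` elements. Finally every `m_σ^r` has the same letters as the sorted `m_e^r`.
-/

namespace UlamPaper

/-- The `r`-regular Ulam sphere of radius `t` centered at `m_σ^r`. -/
def multSphere {n : ℕ} (r : ℕ) (σ : Equiv.Perm (Fin n)) (t : ℕ) : Set (Fin n → ℕ) :=
  {x | ∃ π : Equiv.Perm (Fin n), x = mult r π ∧ multDist r σ π ≤ t}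

open Finset

section Transloc

variable {n : ℕ}

lemma val_transloc (i j k : Fin n) : (transloc i j k : ℕ) = tf i j k := rfl

@[simp]
lemma transloc_apply_target (i j : Fin n) : transloc i j j = i := by
  ext; rw [val_transloc]; unfold tf; split_ifs <;> omega

@[simp]
lemma transloc_self (i : Fin n) : transloc i i = 1 := by
  ext k; rw [val_transloc]; unfold tf; split_ifs <;> simp <;> omega

lemma transloc_apply_of_lt {i j k : Fin n} (hi : k < i) (hj : k < j) : transloc i j k = k := by
  ext; rw [val_transloc]; unfold tf; split_ifs <;> omega

lemma transloc_apply_of_gt {i j k : Fin n} (hi : i < k) (hj : j < k) : transloc i j k = k := by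
  ext; rw [val_transloc]; unfold tf; split_ifs <;> omega

lemma val_transloc_of_le_of_lt {i j k : Fin n} (hik : i ≤ k) (hkj : k < j) :
    (transloc i j k : ℕ) = k + 1 := by
  rw [val_transloc]; unfold tf; split_ifs <;> omega

lemma val_transloc_of_lt_of_le {i j k : Fin n} (hjk : j < k) (hki : k ≤ i) :
    (transloc i j k : ℕ) = k - 1 := by
  rw [val_transloc]; unfold tf; split_ifs <;> omega

lemma transloc_comm_of_val_succ {i j : Fin n} (h : (j : ℕ) = i + 1) :
    transloc i j = transloc j i := by
  ext k; simp only [val_transloc]; unfold tf; split_ifs <;> omega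

lemma transloc_succAbove_s13 (i j : Fin (n + 1)) (p : Fin n) :
    transloc i j (j.succAbove p) = i.succAbove p := by
  ext; rw [val_transloc]; unfold tf Fin.succAbove
  split_ifs <;> simp only [Fin.lt_def, Fin.val_castSucc, Fin.val_succ] at * <;> omega

lemma transloc_eq_or_mem_Icc {i q : Fin n} (hiq : i ≤ q) (j k : Fin n) :
    transloc i j k = transloc q j k ∨
      (i ≤ transloc i j k ∧ transloc i j k ≤ q ∧ i ≤ transloc q j k ∧ transloc q j k ≤ q) := by
  simp only [Fin.ext_iff, Fin.le_def, val_transloc]; unfold tf; split_ifs <;> omega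

lemma comp_transloc_eq_of_forall_eq {β : Type*} {w : Fin n → β} {i q j : Fin n}
    (hiq : i ≤ q) (hconst : ∀ k, i ≤ k → k ≤ q → w k = w i) :
    w ∘ transloc i j = w ∘ transloc q j := by
  funext k
  rcases transloc_eq_or_mem_Icc hiq j k with h | ⟨h₁, h₂, h₃, h₄⟩
  · rw [Function.comp_apply, h, Function.comp_apply]
  · rw [Function.comp_apply, hconst _ h₁ h₂, Function.comp_apply, hconst _ h₃ h₄]

end Transloc

section CommonSubsequence

variable {n : ℕ} {α : Type*}

def IsCommonSubseqLen (u v : Fin n → α) (k : ℕ) : Prop :=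
  ∃ f g : Fin k → Fin n, StrictMono f ∧ StrictMono g ∧ ∀ p, u (f p) = v (g p)

variable {u v : Fin n → α} {k l : ℕ}

lemma IsCommonSubseqLen.le_length (h : IsCommonSubseqLen u v k) : k ≤ n := by
  obtain ⟨f, -, hf, -⟩ := h
  simpa using Fintype.card_le_of_injective f hf.injective

lemma IsCommonSubseqLen.mono (h : IsCommonSubseqLen u v k) (hlk : l ≤ k) :
    IsCommonSubseqLen u v l := by
  obtain ⟨f, g, hf, hg, hfg⟩ := h
  exact ⟨f ∘ Fin.castLE hlk, g ∘ Fin.castLE hlk, hf.comp (Fin.strictMono_castLE hlk),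
    hg.comp (Fin.strictMono_castLE hlk), fun p => hfg _⟩

lemma isCommonSubseqLen_iff_le_lcsLen : IsCommonSubseqLen u v k ↔ k ≤ lcsLen u v := by
  have hbdd : BddAbove {k | IsCommonSubseqLen u v k} := ⟨n, fun _ hk => hk.le_length⟩
  have hzero : IsCommonSubseqLen u v 0 :=
    ⟨Fin.elim0, Fin.elim0, fun a => a.elim0, fun a => a.elim0, fun p => p.elim0⟩
  exact ⟨fun h => le_csSup hbdd h, fun h => (Nat.sSup_mem ⟨0, hzero⟩ hbdd).mono h⟩

lemma isCommonSubseqLen_comp_transloc (u : Fin (n + 1) → α) (i j : Fin (n + 1)) :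
    IsCommonSubseqLen u (u ∘ transloc i j) n :=
  ⟨i.succAbove, j.succAbove, Fin.strictMono_succAbove i, Fin.strictMono_succAbove j,
    fun p => by simp [transloc_succAbove_s13]⟩

end CommonSubsequence

lemma _root_.Fin.exists_eq_succAbove_of_strictMono {n : ℕ} {f : Fin n → Fin (n + 1)}
    (hf : StrictMono f) : ∃ i : Fin (n + 1), f = i.succAbove := by
  obtain ⟨i, hi⟩ : ∃ i, i ∉ Set.range f := by
    by_contra! h
    simpa using Fintype.card_le_of_surjective f h
  refine ⟨i, ?_⟩
  rw [Finset.orderEmbOfFin_unique (s := {i}ᶜ) (by simp [card_compl])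
      (fun x => by simpa using fun h => hi ⟨x, h⟩) hf,
    orderEmbOfFin_compl_singleton_eq_succAboveOrderEmb]
  rfl

lemma _root_.Finset.eq_of_sum_eq_of_forall_ne {ι M : Type*} [Fintype ι] [DecidableEq ι]
    [AddCancelCommMonoid M] {f g : ι → M} (hsum : ∑ i, f i = ∑ i, g i) (j : ι)
    (h : ∀ i ≠ j, f i = g i) : f = g := by
  funext i
  by_cases hij : i = j
  · subst hij
    have hf := add_sum_erase univ f (mem_univ i)
    have hg := add_sum_erase univ g (mem_univ i)
    rw [sum_congr rfl fun k hk => h k (ne_of_mem_erase hk)] at hf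
    exact add_right_cancel (hf.trans (hsum.trans hg.symm))
  · exact h i hij

lemma exists_eq_comp_transloc {n : ℕ} {M : Type*} [AddCancelCommMonoid M]
    {u v : Fin (n + 1) → M} (hsum : ∑ k, u k = ∑ k, v k) (h : IsCommonSubseqLen u v n) :
    ∃ i j, v = u ∘ transloc i j := by
  obtain ⟨f, g, hf, hg, hfg⟩ := h
  obtain ⟨i, rfl⟩ := Fin.exists_eq_succAbove_of_strictMono hf
  obtain ⟨j, rfl⟩ := Fin.exists_eq_succAbove_of_strictMono hg
  refine ⟨i, j, (eq_of_sum_eq_of_forall_ne ?_ j fun k hk => ?_).symm⟩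
  · exact (Equiv.sum_comp (transloc i j) u).trans hsum
  · obtain ⟨p, rfl⟩ := Fin.exists_succAbove_eq hk
    simp [transloc_succAbove_s13, hfg]

def translocRange {n : ℕ} {α : Type*} (w : Fin n → α) : Set (Fin n → α) :=
  Set.range fun ij : Fin n × Fin n => w ∘ transloc ij.1 ij.2

lemma mult_eq_comp {n : ℕ} (r : ℕ) (σ : Equiv.Perm (Fin n)) : mult r σ = mult r 1 ∘ σ := rfl

lemma multSphere_one_eq {n : ℕ} (r : ℕ) (σ : Equiv.Perm (Fin (n + 1))) :
    multSphere r σ 1 = translocRange (mult r σ) := by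
  ext x
  constructor
  · rintro ⟨π, rfl, hd⟩
    have hlcs : IsCommonSubseqLen (mult r σ) (mult r π) n :=
      isCommonSubseqLen_iff_le_lcsLen.2 (by unfold multDist at hd; omega)
    obtain ⟨i, j, h⟩ := exists_eq_comp_transloc
      ((Equiv.sum_comp σ (mult r 1)).trans (Equiv.sum_comp π (mult r 1)).symm) hlcs
    exact ⟨(i, j), h.symm⟩
  · rintro ⟨⟨i, j⟩, rfl⟩
    refine ⟨σ * transloc i j, rfl, ?_⟩
    have := isCommonSubseqLen_iff_le_lcsLen.1 (isCommonSubseqLen_comp_transloc (mult r σ) i j)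
    change n + 1 - lcsLen (mult r σ) (mult r σ ∘ transloc i j) ≤ 1
    omega

section Letters

variable {n : ℕ} {α : Type*} [DecidableEq α]

def letters (w : Fin n → α) : Finset α := univ.image w

def OccursBefore (w : Fin n → α) (p : Fin n) (c : α) : Prop := ∃ k < p, w k = c

def OccursAfter (w : Fin n → α) (p : Fin n) (c : α) : Prop := ∃ k, p < k ∧ w k = c

/-- The occurrences of `c` after `p` form a block starting at position `p + 1`. -/
def RunAfter (w : Fin n → α) (p : Fin n) (c : α) : Prop :=
  ∀ k₁ k₂, p < k₁ → k₁ ≤ k₂ → w k₂ = c → w k₁ = c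

def IsGoodPair (w : Fin n → α) (p : Fin n) (c : α) : Prop :=
  OccursBefore w p c ∨ (OccursAfter w p c ∧ ¬ RunAfter w p c)

noncomputable def offDiagPairs (w : Fin n → α) : Finset (Fin n × α) :=
  (univ ×ˢ letters w).filter fun pc => pc.2 ≠ w pc.1

open Classical in
noncomputable def goodPairs (w : Fin n → α) : Finset (Fin n × α) :=
  (offDiagPairs w).filter fun pc => IsGoodPair w pc.1 pc.2

open Classical in
noncomputable def badPairs (w : Fin n → α) : Finset (Fin n × α) :=
  (offDiagPairs w).filter fun pc => ¬ IsGoodPair w pc.1 pc.2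

variable (w : Fin n → α) {p : Fin n} {c : α}

lemma mem_letters : c ∈ letters w ↔ ∃ k, w k = c := by simp [letters]

lemma mem_goodPairs : (p, c) ∈ goodPairs w ↔ c ∈ letters w ∧ c ≠ w p ∧ IsGoodPair w p c := by
  simp [goodPairs, offDiagPairs, and_assoc]

lemma mem_badPairs : (p, c) ∈ badPairs w ↔ c ∈ letters w ∧ c ≠ w p ∧ ¬ IsGoodPair w p c := by
  simp [badPairs, offDiagPairs, and_assoc]

lemma card_offDiagPairs : #(offDiagPairs w) = n * (#(letters w) - 1) := by
  rw [offDiagPairs, card_filter, sum_product]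
  simp_rw [← card_filter, filter_ne', card_erase_of_mem ((mem_letters w).2 ⟨_, rfl⟩)]
  simp

lemma card_goodPairs_add_card_badPairs :
    #(goodPairs w) + #(badPairs w) = n * (#(letters w) - 1) := by
  rw [goodPairs, badPairs, card_filter_add_card_filter_not, card_offDiagPairs]

lemma letters_comp_perm (σ : Equiv.Perm (Fin n)) : letters (w ∘ σ) = letters w := by
  rw [letters, ← image_image, image_univ_equiv, letters]

end Letters

section CanonicalMove

variable {n : ℕ} {α : Type*} [DecidableEq α] (w : Fin (n + 1) → α)

noncomputable def lastOccIn (s : Finset (Fin (n + 1))) (c : α) : Fin (n + 1) :=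
  (s.filter (w · = c)).sup id

variable {w} {s : Finset (Fin (n + 1))} {p k : Fin (n + 1)} {c : α}

lemma lastOccIn_spec (h : ∃ k ∈ s, w k = c) : lastOccIn w s c ∈ s ∧ w (lastOccIn w s c) = c := by
  obtain ⟨k, hk, hwk⟩ := h
  obtain ⟨i, hi, hsup⟩ :=
    exists_mem_eq_sup (s.filter (w · = c)) ⟨k, mem_filter.2 ⟨hk, hwk⟩⟩ id
  rw [lastOccIn, hsup]
  exact mem_filter.1 hi

lemma le_lastOccIn (hk : k ∈ s) (hwk : w k = c) : k ≤ lastOccIn w s c :=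
  le_sup (f := id) (s := s.filter (w · = c)) (mem_filter.2 ⟨hk, hwk⟩)

variable (w) in
open Classical in
noncomputable def canonicalSource (p : Fin (n + 1)) (c : α) : Fin (n + 1) :=
  if OccursBefore w p c then lastOccIn w (Iio p) c else lastOccIn w univ c

variable (w) in
noncomputable def canonicalMove (p : Fin (n + 1)) (c : α) : Fin (n + 1) → α :=
  w ∘ transloc (canonicalSource w p c) p

variable (w) in
noncomputable def canonicalMoves : Set (Fin (n + 1) → α) :=
  (fun pc : Fin (n + 1) × α => canonicalMove w pc.1 pc.2) '' goodPairs w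

lemma canonicalMoves_finite : (canonicalMoves w).Finite :=
  (goodPairs w).finite_toSet.image _

lemma canonicalSource_of_occursBefore (h : OccursBefore w p c) :
    canonicalSource w p c < p ∧ w (canonicalSource w p c) = c ∧
      ∀ k < p, w k = c → k ≤ canonicalSource w p c := by
  obtain ⟨k, hkp, hwk⟩ := h
  rw [canonicalSource, if_pos ⟨k, hkp, hwk⟩]
  obtain ⟨hmem, hw⟩ := lastOccIn_spec ⟨k, mem_Iio.2 hkp, hwk⟩
  exact ⟨mem_Iio.1 hmem, hw, fun k hk hwk => le_lastOccIn (mem_Iio.2 hk) hwk⟩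

lemma canonicalSource_of_not_occursBefore (hb : ¬ OccursBefore w p c) (ha : OccursAfter w p c) :
    p < canonicalSource w p c ∧ w (canonicalSource w p c) = c ∧
      ∀ k, w k = c → k ≤ canonicalSource w p c := by
  obtain ⟨k, hpk, hwk⟩ := ha
  rw [canonicalSource, if_neg hb]
  exact ⟨hpk.trans_le (le_lastOccIn (mem_univ k) hwk), (lastOccIn_spec ⟨k, mem_univ k, hwk⟩).2,
    fun k hwk => le_lastOccIn (mem_univ k) hwk⟩

lemma canonicalMove_apply_self (h : IsGoodPair w p c) : canonicalMove w p c p = c := by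
  rw [canonicalMove, Function.comp_apply, transloc_apply_target]
  by_cases hb : OccursBefore w p c
  · exact (canonicalSource_of_occursBefore hb).2.1
  · exact (canonicalSource_of_not_occursBefore hb (h.resolve_left hb).1).2.1

lemma canonicalMove_apply_of_gt (h : OccursBefore w p c) (hk : p < k) :
    canonicalMove w p c k = w k := by
  rw [canonicalMove, Function.comp_apply,
    transloc_apply_of_gt ((canonicalSource_of_occursBefore h).1.trans hk) hk]

lemma canonicalMove_apply_of_lt (hb : ¬ OccursBefore w p c) (ha : OccursAfter w p c)
    (hk : k < p) : canonicalMove w p c k = w k := by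
  rw [canonicalMove, Function.comp_apply,
    transloc_apply_of_lt (hk.trans (canonicalSource_of_not_occursBefore hb ha).1) hk]

lemma canonicalMove_ne_self (hcp : c ≠ w p) (h : IsGoodPair w p c) : canonicalMove w p c ≠ w :=
  fun heq => hcp (by rw [← congrFun heq p, canonicalMove_apply_self h])

end CanonicalMove

lemma _root_.Fin.apply_eq_of_forall_apply_eq_succ {m : ℕ} {β : Type*} {f : Fin m → β}
    {a b : Fin m} (h : ∀ k k' : Fin m, a ≤ k → k < b → (k' : ℕ) = k + 1 → f k = f k') :
    ∀ k, a ≤ k → k ≤ b → f k = f b := by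
  suffices ∀ d, ∀ k : Fin m, (b : ℕ) - k = d → a ≤ k → k ≤ b → f k = f b from
    fun k => this _ k rfl
  intro d
  induction d with
  | zero => intro k hd _ hkb; rw [show k = b by omega]
  | succ d ih =>
    intro k hd hak hkb
    obtain ⟨k', hk'⟩ : ∃ k' : Fin m, (k' : ℕ) = k + 1 := ⟨⟨k + 1, by omega⟩, rfl⟩
    rw [h k k' hak (by omega) hk']
    exact ih k' (by omega) (by omega) (by omega)

/-- Comparing the two words position by position forces `q' = p` and `p' = p + 1`, and then
`w` is constantly `w q` on `(p, q]`, which is a run after `p`. -/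
lemma comp_transloc_ne_of_lt {n : ℕ} {α : Type*} {w : Fin (n + 1) → α} {p q p' q' : Fin (n + 1)}
    (hpq : p < q) (hqp : w q ≠ w p) (hq : ∀ k, w k = w q → k ≤ q) (hrun : ¬ RunAfter w p (w q))
    (hq'p' : q' < p') (hwq'p' : w q' ≠ w p') (hq' : ∀ k < p', w k = w q' → k ≤ q')
    (hpp' : p < p') :
    w ∘ transloc q p ≠ w ∘ transloc q' p' := by
  intro heq
  have hx : ∀ k, w (transloc q p k) = w (transloc q' p' k) := congrFun heq
  have hleft : ∀ k k' : Fin (n + 1), p < k → k ≤ q → (k' : ℕ) + 1 = k →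
      w (transloc q p k) = w k' := fun k k' h1 h2 h3 =>
    congrArg w (Fin.ext (by rw [val_transloc_of_lt_of_le h1 h2]; omega))
  have hright : ∀ k k' : Fin (n + 1), q' ≤ k → k < p' → (k' : ℕ) = k + 1 →
      w (transloc q' p' k) = w k' := fun k k' h1 h2 h3 =>
    congrArg w (Fin.ext (by rw [val_transloc_of_le_of_lt h1 h2]; omega))
  have hp'q : p' ≤ q := by
    by_contra! h
    have := hx p'
    rw [transloc_apply_target, transloc_apply_of_gt h hpp'] at this
    exact hwq'p' this.symm
  have hq'p : q' ≤ p := by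
    by_contra! h
    have := hx p
    rw [transloc_apply_target, transloc_apply_of_lt h hpp'] at this
    exact hqp this
  obtain rfl : q' = p := by
    by_contra hne
    have hlt : q' < p := lt_of_le_of_ne hq'p hne
    obtain ⟨a, ha⟩ : ∃ a : Fin (n + 1), (a : ℕ) = q' + 1 := ⟨⟨q' + 1, by omega⟩, rfl⟩
    have := hx q'
    rw [transloc_apply_of_lt (hlt.trans hpq) hlt, hright q' a le_rfl hq'p' ha] at this
    have := hq' a (by omega) this.symm
    omega
  obtain ⟨a, ha⟩ : ∃ a : Fin (n + 1), (a : ℕ) = q' + 1 := ⟨⟨q' + 1, by omega⟩, rfl⟩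
  have hp' : p' = a := by
    by_contra hne
    obtain ⟨b, hb⟩ : ∃ b : Fin (n + 1), (b : ℕ) = q' + 2 := ⟨⟨q' + 2, by omega⟩, rfl⟩
    have := hx a
    rw [hleft a q' (by omega) (by omega) ha.symm,
      hright a b (by omega) (by omega) (by omega)] at this
    rcases lt_or_eq_of_le (show b ≤ p' by omega) with hlt | rfl
    · have := hq' b hlt this.symm
      omega
    · exact hwq'p' this
  apply hrun
  have hconst := Fin.apply_eq_of_forall_apply_eq_succ (f := w) (a := a) (b := q)
    fun k k' h1 h2 h3 => by
      have := hx k'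
      rw [hleft k' k (by omega) (by omega) (by omega),
        transloc_apply_of_gt (by omega) (by omega)] at this
      exact this
  intro k₁ k₂ h1 h2 h3
  exact hconst k₁ (by omega) (h2.trans (hq k₂ h3))

section LowerBound

variable {n : ℕ} {α : Type*} [DecidableEq α] {w : Fin (n + 1) → α}

lemma canonicalMove_injOn :
    Set.InjOn (fun pc : Fin (n + 1) × α => canonicalMove w pc.1 pc.2) (goodPairs w) := by
  have key : ∀ ⦃p c p' c'⦄, (p, c) ∈ goodPairs w → (p', c') ∈ goodPairs w → p < p' →
      canonicalMove w p c ≠ canonicalMove w p' c' := by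
    intro p c p' c' h h' hpp' heq
    obtain ⟨-, hcp, hg⟩ := (mem_goodPairs w).1 h
    obtain ⟨-, hcp', hg'⟩ := (mem_goodPairs w).1 h'
    by_cases hb : OccursBefore w p c
    · apply hcp'
      rw [← canonicalMove_apply_self hg', ← heq, canonicalMove_apply_of_gt hb hpp']
    by_cases hb' : OccursBefore w p' c'
    · obtain ⟨ha, hrun⟩ := hg.resolve_left hb
      obtain ⟨hpq, hwq, hq⟩ := canonicalSource_of_not_occursBefore hb ha
      obtain ⟨hq'p', hwq', hq'⟩ := canonicalSource_of_occursBefore hb'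
      exact comp_transloc_ne_of_lt hpq (by rwa [hwq]) (by rwa [hwq]) (by rwa [hwq]) hq'p'
        (by rwa [hwq']) (by rwa [hwq']) hpp' heq
    · apply hcp
      rw [← canonicalMove_apply_self hg, heq,
        canonicalMove_apply_of_lt hb' (hg'.resolve_left hb').1 hpp']
  rintro ⟨p, c⟩ h ⟨p', c'⟩ h' heq
  rcases lt_trichotomy p p' with hlt | rfl | hgt
  · exact absurd heq (key h h' hlt)
  · rw [← canonicalMove_apply_self ((mem_goodPairs w).1 h).2.2,
      ← canonicalMove_apply_self ((mem_goodPairs w).1 h').2.2]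
    exact congrArg (fun x => (p, x p)) heq
  · exact absurd heq.symm (key h' h hgt)

lemma one_add_card_goodPairs_le : 1 + #(goodPairs w) ≤ (translocRange w).ncard := by
  have hsub : insert w (canonicalMoves w) ⊆ translocRange w := by
    refine Set.insert_subset ⟨(0, 0), by simp⟩ ?_
    rintro _ ⟨⟨p, c⟩, -, rfl⟩
    exact ⟨(canonicalSource w p c, p), rfl⟩
  have hnot : w ∉ canonicalMoves w := by
    rintro ⟨⟨p, c⟩, h, heq⟩
    obtain ⟨-, hcp, hg⟩ := (mem_goodPairs w).1 h
    exact canonicalMove_ne_self hcp hg heq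
  calc 1 + #(goodPairs w) = (insert w (canonicalMoves w)).ncard := by
        rw [Set.ncard_insert_of_notMem hnot canonicalMoves_finite, canonicalMoves,
          canonicalMove_injOn.ncard_image, Set.ncard_coe_finset, add_comm]
    _ ≤ _ := Set.ncard_le_ncard hsub (Set.finite_range _)

end LowerBound

section BadPairs

variable {n : ℕ} {α : Type*} [DecidableEq α] {w : Fin (n + 1) → α} {p : Fin (n + 1)} {c : α}

lemma runAfter_of_mem_badPairs (h : (p, c) ∈ badPairs w) :
    ¬ OccursBefore w p c ∧ OccursAfter w p c ∧ RunAfter w p c := by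
  obtain ⟨hc, hcp, hg⟩ := (mem_badPairs w).1 h
  obtain ⟨k, rfl⟩ := (mem_letters w).1 hc
  simp only [IsGoodPair, not_or, not_and, not_not] at hg
  have ha : OccursAfter w p (w k) := by
    rcases lt_trichotomy k p with hkp | rfl | hpk
    · exact absurd ⟨k, hkp, rfl⟩ hg.1
    · exact absurd rfl hcp
    · exact ⟨k, hpk, rfl⟩
  exact ⟨hg.1, ha, hg.2 ha⟩

/-- A letter has at most one bad position, and the first letter of the word has none. -/
lemma card_badPairs_add_one_le : #(badPairs w) + 1 ≤ #(letters w) := by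
  have hmaps : Set.MapsTo Prod.snd (badPairs w : Set (Fin (n + 1) × α))
      ((letters w).erase (w 0)) := by
    rintro ⟨p, c⟩ h
    obtain ⟨hb, -, -⟩ := runAfter_of_mem_badPairs h
    obtain ⟨hc, hcp, -⟩ := (mem_badPairs w).1 h
    refine mem_erase.2 ⟨fun hc0 => ?_, hc⟩
    rcases (Fin.zero_le p).lt_or_eq with hp | rfl
    · exact hb ⟨0, hp, hc0.symm⟩
    · exact hcp hc0
  have hinj : Set.InjOn Prod.snd (badPairs w : Set (Fin (n + 1) × α)) := by
    suffices ∀ ⦃p p' c⦄, (p, c) ∈ badPairs w → (p', c) ∈ badPairs w → ¬ p < p' by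
      rintro ⟨p, c⟩ h ⟨p', c'⟩ h' (rfl : c = c')
      exact Prod.ext (le_antisymm (not_lt.1 (this h' h)) (not_lt.1 (this h h'))) rfl
    intro p p' c h h' hpp'
    obtain ⟨-, -, hrun⟩ := runAfter_of_mem_badPairs h
    obtain ⟨-, ⟨k, hp'k, hwk⟩, -⟩ := runAfter_of_mem_badPairs h'
    exact ((mem_badPairs w).1 h').2.1 (hrun p' k hpp' hp'k.le hwk).symm
  have := card_le_card_of_injOn Prod.snd hmaps hinj
  rw [card_erase_of_mem ((mem_letters w).2 ⟨0, rfl⟩)] at this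
  have : 0 < #(letters w) := card_pos.2 ⟨w 0, (mem_letters w).2 ⟨0, rfl⟩⟩
  omega

theorem le_ncard_translocRange (w : Fin (n + 1) → α) :
    1 + n * (#(letters w) - 1) ≤ (translocRange w).ncard := by
  have hgood := one_add_card_goodPairs_le (w := w)
  have hsum := card_goodPairs_add_card_badPairs w
  have hbad := card_badPairs_add_one_le (w := w)
  rw [Nat.succ_mul] at hsum
  omega

end BadPairs

lemma _root_.Monotone.apply_eq_of_apply_eq {β γ : Type*} [Preorder β] [PartialOrder γ]
    {f : β → γ} (hf : Monotone f) {a b : β} (hab : f a = f b) {x : β} (hax : a ≤ x)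
    (hxb : x ≤ b) : f x = f a :=
  le_antisymm (hab ▸ hf hxb) (hf hax)

section Monotone

variable {n : ℕ} {α : Type*} [LinearOrder α] {w : Fin (n + 1) → α}

lemma comp_transloc_mem_insert_canonicalMoves_of_lt (hw : Monotone w) {i j : Fin (n + 1)}
    (hij : i < j) :
    w ∘ transloc i j ∈ insert w (canonicalMoves w) := by
  by_cases hwij : w i = w j
  · left
    rw [comp_transloc_eq_of_forall_eq hij.le
      fun k => hw.apply_eq_of_apply_eq hwij, transloc_self]
    rfl
  have hb : OccursBefore w j (w i) := ⟨i, hij, rfl⟩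
  obtain ⟨hqj, hwq, hq⟩ := canonicalSource_of_occursBefore hb
  refine Or.inr ⟨(j, w i), (mem_goodPairs w).2 ⟨(mem_letters w).2 ⟨i, rfl⟩, hwij, Or.inl hb⟩, ?_⟩
  exact (comp_transloc_eq_of_forall_eq (hq i hij rfl)
    fun k => hw.apply_eq_of_apply_eq hwq.symm).symm

lemma comp_transloc_mem_insert_canonicalMoves_of_gt (hw : Monotone w) {i j : Fin (n + 1)}
    (hji : j < i) :
    w ∘ transloc i j ∈ insert w (canonicalMoves w) := by
  by_cases hwji : w j = w i
  · left
    rw [← comp_transloc_eq_of_forall_eq hji.le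
      fun k => hw.apply_eq_of_apply_eq hwji, transloc_self]
    rfl
  have hlt : w j < w i := lt_of_le_of_ne (hw hji.le) hwji
  have hb : ¬ OccursBefore w j (w i) := fun ⟨k, hkj, hk⟩ => (hw hkj.le).not_gt (hk ▸ hlt)
  have ha : OccursAfter w j (w i) := ⟨i, hji, rfl⟩
  by_cases hrun : RunAfter w j (w i)
  · -- `w i` is preceded by a run of copies of itself, so the move swaps `j` and `j + 1`.
    obtain ⟨j₁, hj₁⟩ : ∃ j₁ : Fin (n + 1), (j₁ : ℕ) = j + 1 := ⟨⟨j + 1, by omega⟩, rfl⟩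
    have hwj₁ : w j₁ = w i := hrun j₁ i (by omega) (by omega) rfl
    have hb₁ : OccursBefore w j₁ (w j) := ⟨j, by omega, rfl⟩
    obtain ⟨hqj₁, -, hq⟩ := canonicalSource_of_occursBefore hb₁
    have hsrc : canonicalSource w j₁ (w j) = j := le_antisymm (by omega) (hq j (by omega) rfl)
    refine Or.inr ⟨(j₁, w j), (mem_goodPairs w).2 ⟨(mem_letters w).2 ⟨j, rfl⟩,
      by rwa [hwj₁], Or.inl hb₁⟩, ?_⟩
    change w ∘ transloc (canonicalSource w j₁ (w j)) j₁ = w ∘ transloc i j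
    rw [hsrc, transloc_comm_of_val_succ hj₁, comp_transloc_eq_of_forall_eq (q := i) (by omega)
      fun k h₁ h₂ => (hrun k i (by omega) h₂ rfl).trans hwj₁.symm]
  obtain ⟨hjq, hwq, hq⟩ := canonicalSource_of_not_occursBefore hb ha
  refine Or.inr ⟨(j, w i), (mem_goodPairs w).2 ⟨(mem_letters w).2 ⟨i, rfl⟩, Ne.symm hwji,
    Or.inr ⟨ha, hrun⟩⟩, ?_⟩
  exact (comp_transloc_eq_of_forall_eq (hq i rfl)
    fun k => hw.apply_eq_of_apply_eq hwq.symm).symm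

lemma translocRange_subset_of_monotone (hw : Monotone w) :
    translocRange w ⊆ insert w (canonicalMoves w) := by
  rintro _ ⟨⟨i, j⟩, rfl⟩
  rcases lt_trichotomy i j with hij | rfl | hji
  · exact comp_transloc_mem_insert_canonicalMoves_of_lt hw hij
  · exact Or.inl (by simp)
  · exact comp_transloc_mem_insert_canonicalMoves_of_gt hw hji

/-- The position just before the first occurrence of any letter other than `w 0` is bad. -/
lemma card_letters_le_card_badPairs_add_one (hw : Monotone w) :
    #(letters w) ≤ #(badPairs w) + 1 := by
  have hsub : (letters w).erase (w 0) ⊆ (badPairs w).image Prod.snd := by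
    intro c hc
    obtain ⟨hc0, hcl⟩ := mem_erase.1 hc
    obtain ⟨k₀, hk₀, hmin⟩ := exists_min_image (univ.filter (w · = c)) id
      (by obtain ⟨k, hk⟩ := (mem_letters w).1 hcl; exact ⟨k, by simpa using hk⟩)
    simp only [mem_filter, mem_univ, true_and, id] at hk₀ hmin
    have hpos : (0 : ℕ) < k₀ := Nat.pos_of_ne_zero fun h => hc0 (by
      rw [← hk₀, show k₀ = 0 from Fin.ext h])
    obtain ⟨p, hp⟩ : ∃ p : Fin (n + 1), (p : ℕ) + 1 = k₀ :=
      ⟨⟨k₀ - 1, by omega⟩, Nat.sub_add_cancel hpos⟩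
    have hbefore : ∀ k ≤ p, w k ≠ c := fun k hk hwk => by have := hmin k hwk; omega
    refine mem_image.2 ⟨(p, c), (mem_badPairs w).2 ⟨hcl, (hbefore p le_rfl).symm, ?_⟩, rfl⟩
    rintro (⟨k, hkp, hwk⟩ | ⟨-, hrun⟩)
    · exact hbefore k hkp.le hwk
    · refine hrun fun k₁ k₂ h₁ h₂ h₃ => le_antisymm (h₃ ▸ hw h₂) (hk₀ ▸ hw ?_)
      omega
  have := pred_card_le_card_erase (s := letters w) (a := w 0)
  have := card_le_card hsub
  have := card_image_le (s := badPairs w) (f := Prod.snd)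
  omega

theorem ncard_translocRange_le_of_monotone (hw : Monotone w) :
    (translocRange w).ncard ≤ 1 + n * (#(letters w) - 1) := by
  have hmoves : (translocRange w).ncard ≤ 1 + #(goodPairs w) :=
    calc (translocRange w).ncard ≤ (insert w (canonicalMoves w)).ncard :=
          Set.ncard_le_ncard (translocRange_subset_of_monotone hw) (canonicalMoves_finite.insert w)
      _ ≤ (canonicalMoves w).ncard + 1 := Set.ncard_insert_le _ _
      _ ≤ #(goodPairs w) + 1 := by
          grw [canonicalMoves, Set.ncard_image_le (goodPairs w).finite_toSet, Set.ncard_coe_finset]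
      _ = 1 + #(goodPairs w) := add_comm _ _
  have hsum := card_goodPairs_add_card_badPairs w
  have hbad := card_letters_le_card_badPairs_add_one hw
  rw [Nat.succ_mul] at hsum
  omega

end Monotone

lemma monotone_mult_one {n : ℕ} (r : ℕ) : Monotone (mult r (1 : Equiv.Perm (Fin n))) :=
  fun _ _ h => Nat.add_le_add_right (Nat.div_le_div_right h) 1

theorem multSphere_identity_min_general {n r : ℕ} (σ : Equiv.Perm (Fin n)) :
    (multSphere r (1 : Equiv.Perm (Fin n)) 1).ncard ≤ (multSphere r σ 1).ncard := by
  obtain _ | n := n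
  · have h : mult r (1 : Equiv.Perm (Fin 0)) = mult r σ := Subsingleton.elim _ _
    simp only [multSphere, multDist, h, le_refl]
  have hletters : letters (mult r σ) = letters (mult r (1 : Equiv.Perm (Fin (n + 1)))) := by
    rw [mult_eq_comp, letters_comp_perm]
  rw [multSphere_one_eq, multSphere_one_eq]
  calc (translocRange (mult r 1)).ncard ≤ 1 + n * (#(letters (mult r 1)) - 1) :=
        ncard_translocRange_le_of_monotone (monotone_mult_one r)
    _ = 1 + n * (#(letters (mult r σ)) - 1) := by rw [hletters]
    _ ≤ (translocRange (mult r σ)).ncard := le_ncard_translocRange _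

/-- The identity multipermutation minimizes the `r`-regular Ulam sphere of radius 1. -/
theorem multSphere_identity_min {n r : ℕ} (hr : 0 < r) (hdvd : r ∣ n)
    (σ : Equiv.Perm (Fin n)) :
    (multSphere r (1 : Equiv.Perm (Fin n)) 1).ncard ≤ (multSphere r σ 1).ncard :=
  multSphere_identity_min_general σ

end UlamPaper
end
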